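/- arXiv:1412.5374 — 3 statements merged into one kernel-verified Lean document; each statement's English description precedes it below -/
import Mathlib

section
/- Let p_M and p̂_M be two pmfs on a finite set ℳ with p_M strictly positive, and let p_{C|M} be a Markov kernel to a finite set 𝒞. Let ℙ and ℙ̂ be the joint laws of (M,C) induced by p_M and p̂_M respectively (with the same kernel), and let ρ_m(M;C) be the maximal correlation under ℙ. Then for any functions f: ℳ → ℕ and f̃: 𝒞 → ℕ, |ℙ̂{f(M)=f̃(C)} − Σ_i ℙ̂{f(M)=i}·ℙ{f̃(C)=i}| ≤ ρ_m(M;C)·√(χ²(p̂_M ‖ p_M) + 1). -/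
open BigOperators Finset
open scoped Classical

/-- Hirschfeld–Gebelein–Rényi maximal correlation of a joint pmf `p` on `X × Y`:
the supremum of `E[f(X) g(Y)]` over zero-mean, unit-second-moment `f`, `g`
(`sSup ∅ = 0` if no such functions exist). -/
noncomputable def maxCorr {X Y : Type*} [Fintype X] [Fintype Y] (p : X → Y → ℝ) : ℝ :=
  sSup {r : ℝ | ∃ f : X → ℝ, ∃ g : Y → ℝ,
    (∑ x, ∑ y, p x y * f x) = 0 ∧
    (∑ x, ∑ y, p x y * g y) = 0 ∧
    (∑ x, ∑ y, p x y * (f x) ^ 2) = 1 ∧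
    (∑ x, ∑ y, p x y * (g y) ^ 2) = 1 ∧
    r = ∑ x, ∑ y, p x y * f x * g y}

/-- Spectral (operator) norm of a real matrix. -/
noncomputable def specNorm {X Y : Type*} [Fintype X] [Fintype Y] (B : Matrix X Y ℝ) : ℝ :=
  sSup {r : ℝ | ∃ v : Y → ℝ, (∑ y, (v y) ^ 2) = 1 ∧
    r = Real.sqrt (∑ x, (B.mulVec v x) ^ 2)}

/-!
For each value `i` of `f`, put `aᵢ(m) = 1{f m = i} p̂(m)/p(m)` and `bᵢ(c) = 1{f̃ c = i}`.
Under `ℙ`, `E[aᵢ(M) bᵢ(C)] = ℙ̂{f(M) = i = f̃(C)}` and `E[aᵢ(M)] = ℙ̂{f(M) = i}`, so the quantity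
inside the absolute value is `∑ᵢ Cov(aᵢ, bᵢ)`. Normalising the centred functions gives
`|Cov(a, b)| ≤ ρ_m σ(a) σ(b)`, and Cauchy–Schwarz over `i` bounds the sum by
`ρ_m √(∑ᵢ E aᵢ²) √(∑ᵢ E bᵢ²)`, where `∑ᵢ E aᵢ² = ∑ p̂²/p = χ² + 1` and `∑ᵢ E bᵢ² ≤ 1`.
This replaces the paper's average over Rademacher signs attached to the fibres of `f`.
-/

lemma Real.sSup_nonneg_of_forall_neg_mem {S : Set ℝ} (hS : ∀ r ∈ S, -r ∈ S) : 0 ≤ sSup S := by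
  obtain rfl | ⟨r, hr⟩ := S.eq_empty_or_nonempty
  · exact Real.sSup_empty.ge
  · rcases le_total 0 r with h | h
    · exact Real.sSup_nonneg' ⟨r, hr, h⟩
    · exact Real.sSup_nonneg' ⟨-r, hS r hr, neg_nonneg.2 h⟩

section JointLaw

variable {X Y : Type*} [Fintype X] [Fintype Y] {P : X → Y → ℝ}

lemma sum_sum_mul_sq_nonneg (hP : ∀ x y, 0 ≤ P x y) (h : X → Y → ℝ) :
    0 ≤ ∑ x, ∑ y, P x y * h x y ^ 2 :=
  sum_nonneg fun x _ => sum_nonneg fun y _ => mul_nonneg (hP x y) (sq_nonneg _)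

lemma abs_sum_sum_mul_mul_le (hP : ∀ x y, 0 ≤ P x y) (a b : X → Y → ℝ) :
    |∑ x, ∑ y, P x y * a x y * b x y| ≤
      √(∑ x, ∑ y, P x y * a x y ^ 2) * √(∑ x, ∑ y, P x y * b x y ^ 2) := by
  have hsq : ∀ h : X → Y → ℝ, ∀ x y, 0 ≤ P x y * h x y ^ 2 :=
    fun h x y => mul_nonneg (hP x y) (sq_nonneg _)
  rw [← Real.sqrt_mul (sum_sum_mul_sq_nonneg hP a)]
  refine Real.abs_le_sqrt <| sum_sq_le_sum_mul_sum_of_sq_le_mul _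
    (fun x _ => sum_nonneg fun y _ => hsq a x y)
    (fun x _ => sum_nonneg fun y _ => hsq b x y) fun x _ => ?_
  refine sum_sq_le_sum_mul_sum_of_sq_le_mul _ (fun y _ => hsq a x y)
    (fun y _ => hsq b x y) fun y _ => le_of_eq ?_
  ring

lemma sum_sum_mul_sub_mean (hP1 : ∑ x, ∑ y, P x y = 1) (h : X → Y → ℝ) :
    ∑ x, ∑ y, P x y * (h x y - ∑ x, ∑ y, P x y * h x y) = 0 := by
  simp only [mul_sub, sum_sub_distrib, ← sum_mul, hP1, one_mul, sub_self]

lemma sum_sum_mul_sub_mean_mul_sub_mean (hP1 : ∑ x, ∑ y, P x y = 1) (h k : X → Y → ℝ) :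
    ∑ x, ∑ y, P x y * (h x y - ∑ x, ∑ y, P x y * h x y) * (k x y - ∑ x, ∑ y, P x y * k x y) =
      ∑ x, ∑ y, P x y * h x y * k x y -
        (∑ x, ∑ y, P x y * h x y) * ∑ x, ∑ y, P x y * k x y := by
  set μ := ∑ x, ∑ y, P x y * h x y
  set ν := ∑ x, ∑ y, P x y * k x y
  have expand : ∀ x y, P x y * (h x y - μ) * (k x y - ν) =
      P x y * h x y * k x y - ν * (P x y * h x y) - μ * (P x y * k x y) + μ * ν * P x y :=
    fun x y => by ring
  simp only [expand, sum_add_distrib, sum_sub_distrib, ← mul_sum, hP1]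
  ring

theorem maxCorr_nonneg : 0 ≤ maxCorr P :=
  Real.sSup_nonneg_of_forall_neg_mem fun _ ⟨f, g, hf, hg, hf2, hg2, hr⟩ =>
    ⟨fun x => -f x, g, by simp [hf], hg, by simpa using hf2, hg2, by simp [hr]⟩

theorem le_maxCorr (hP : ∀ x y, 0 ≤ P x y) {f : X → ℝ} {g : Y → ℝ}
    (hf : ∑ x, ∑ y, P x y * f x = 0) (hg : ∑ x, ∑ y, P x y * g y = 0)
    (hf2 : ∑ x, ∑ y, P x y * f x ^ 2 = 1) (hg2 : ∑ x, ∑ y, P x y * g y ^ 2 = 1) :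
    ∑ x, ∑ y, P x y * f x * g y ≤ maxCorr P := by
  refine le_csSup ⟨1, ?_⟩ ⟨f, g, hf, hg, hf2, hg2, rfl⟩
  rintro _ ⟨f, g, -, -, hf2, hg2, rfl⟩
  simpa [hf2, hg2] using
    (le_abs_self _).trans (abs_sum_sum_mul_mul_le hP (fun x _ => f x) (fun _ y => g y))

theorem sum_sum_mul_mul_le_maxCorr_mul_sqrt (hP : ∀ x y, 0 ≤ P x y) {a : X → ℝ} {b : Y → ℝ}
    (ha : ∑ x, ∑ y, P x y * a x = 0) (hb : ∑ x, ∑ y, P x y * b y = 0) :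
    ∑ x, ∑ y, P x y * a x * b y ≤
      maxCorr P * √(∑ x, ∑ y, P x y * a x ^ 2) * √(∑ x, ∑ y, P x y * b y ^ 2) := by
  have hσ2 := Real.sq_sqrt (sum_sum_mul_sq_nonneg hP fun x _ => a x)
  have hτ2 := Real.sq_sqrt (sum_sum_mul_sq_nonneg hP fun _ y => b y)
  set σ := √(∑ x, ∑ y, P x y * a x ^ 2)
  set τ := √(∑ x, ∑ y, P x y * b y ^ 2)
  rcases (mul_nonneg (Real.sqrt_nonneg _) (Real.sqrt_nonneg _) : 0 ≤ σ * τ).eq_or_lt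
    with hdeg | hpos
  · rw [mul_assoc, ← hdeg, mul_zero]
    exact (le_abs_self _).trans
      ((abs_sum_sum_mul_mul_le hP (fun x _ => a x) (fun _ y => b y)).trans hdeg.ge)
  have hσ : σ ≠ 0 := (pos_of_mul_pos_left hpos (Real.sqrt_nonneg _)).ne'
  have hτ : τ ≠ 0 := (pos_of_mul_pos_right hpos (Real.sqrt_nonneg _)).ne'
  have hnormalized := le_maxCorr hP (f := fun x => a x / σ) (g := fun y => b y / τ)
    (by simp only [mul_div_assoc', ← sum_div, ha, zero_div])
    (by simp only [mul_div_assoc', ← sum_div, hb, zero_div])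
    (by simp only [div_pow, mul_div_assoc', ← sum_div, ← hσ2]; exact div_self (pow_ne_zero 2 hσ))
    (by simp only [div_pow, mul_div_assoc', ← sum_div, ← hτ2]; exact div_self (pow_ne_zero 2 hτ))
  calc ∑ x, ∑ y, P x y * a x * b y
      = (∑ x, ∑ y, P x y * (a x / σ) * (b y / τ)) * (σ * τ) := by
        simp only [mul_div_assoc', div_mul_eq_mul_div, div_div, ← sum_div]
        field_simp
    _ ≤ maxCorr P * (σ * τ) := mul_le_mul_of_nonneg_right hnormalized hpos.le
    _ = maxCorr P * σ * τ := (mul_assoc _ _ _).symm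

theorem abs_sum_sum_mul_mul_le_maxCorr_mul_sqrt (hP : ∀ x y, 0 ≤ P x y)
    {a : X → ℝ} {b : Y → ℝ}
    (ha : ∑ x, ∑ y, P x y * a x = 0) (hb : ∑ x, ∑ y, P x y * b y = 0) :
    |∑ x, ∑ y, P x y * a x * b y| ≤
      maxCorr P * √(∑ x, ∑ y, P x y * a x ^ 2) * √(∑ x, ∑ y, P x y * b y ^ 2) := by
  refine abs_le.2 ⟨?_, sum_sum_mul_mul_le_maxCorr_mul_sqrt hP ha hb⟩
  have hneg := sum_sum_mul_mul_le_maxCorr_mul_sqrt hP (a := fun x => -a x) (by simp [ha]) hb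
  simp only [neg_sq, mul_neg, neg_mul, sum_neg_distrib] at hneg
  linarith

theorem abs_cov_le_maxCorr_mul_sqrt (hP : ∀ x y, 0 ≤ P x y) (hP1 : ∑ x, ∑ y, P x y = 1)
    (a : X → ℝ) (b : Y → ℝ) :
    |∑ x, ∑ y, P x y * a x * b y - (∑ x, ∑ y, P x y * a x) * ∑ x, ∑ y, P x y * b y| ≤
      maxCorr P * √(∑ x, ∑ y, P x y * a x ^ 2 - (∑ x, ∑ y, P x y * a x) ^ 2) *
        √(∑ x, ∑ y, P x y * b y ^ 2 - (∑ x, ∑ y, P x y * b y) ^ 2) := by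
  have hcov := sum_sum_mul_sub_mean_mul_sub_mean hP1 (fun x _ => a x) (fun _ y => b y)
  have hvar_a := sum_sum_mul_sub_mean_mul_sub_mean hP1 (fun x _ => a x) (fun x _ => a x)
  have hvar_b := sum_sum_mul_sub_mean_mul_sub_mean hP1 (fun _ y => b y) (fun _ y => b y)
  simp only [mul_assoc, ← sq] at hcov hvar_a hvar_b
  have hcentered := abs_sum_sum_mul_mul_le_maxCorr_mul_sqrt hP
    (sum_sum_mul_sub_mean hP1 (fun x _ => a x)) (sum_sum_mul_sub_mean hP1 (fun _ y => b y))
  simp only [mul_assoc, hcov, hvar_a, hvar_b] at hcentered ⊢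
  exact hcentered

theorem abs_sum_cov_le_maxCorr_mul_sqrt {ι : Type*} (s : Finset ι) (hP : ∀ x y, 0 ≤ P x y)
    (hP1 : ∑ x, ∑ y, P x y = 1) (a : ι → X → ℝ) (b : ι → Y → ℝ) :
    |∑ i ∈ s, (∑ x, ∑ y, P x y * a i x * b i y -
        (∑ x, ∑ y, P x y * a i x) * ∑ x, ∑ y, P x y * b i y)| ≤
      maxCorr P * √(∑ i ∈ s, ∑ x, ∑ y, P x y * a i x ^ 2) *
        √(∑ i ∈ s, ∑ x, ∑ y, P x y * b i y ^ 2) := by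
  have hρ : 0 ≤ maxCorr P := maxCorr_nonneg
  calc _ ≤ ∑ i ∈ s, maxCorr P *
          (√(∑ x, ∑ y, P x y * a i x ^ 2) * √(∑ x, ∑ y, P x y * b i y ^ 2)) := by
        refine (abs_sum_le_sum_abs _ _).trans (sum_le_sum fun i _ => ?_)
        rw [← mul_assoc]
        refine (abs_cov_le_maxCorr_mul_sqrt hP hP1 (a i) (b i)).trans ?_
        gcongr <;> exact sub_le_self _ (sq_nonneg _)
    _ ≤ _ := by
        rw [← mul_sum, mul_assoc]
        gcongr
        exact Real.sum_sqrt_mul_sqrt_le s (fun i => sum_sum_mul_sq_nonneg hP fun x _ => a i x)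
          (fun i => sum_sum_mul_sq_nonneg hP fun _ y => b i y)

lemma sum_sum_mul_indicator_sq_le {ι : Type*} [DecidableEq ι] (hP : ∀ x y, 0 ≤ P x y)
    (s : Finset ι) (g : Y → ι) :
    ∑ i ∈ s, ∑ x, ∑ y, P x y * (if g y = i then 1 else 0) ^ 2 ≤ ∑ x, ∑ y, P x y := by
  rw [sum_comm]
  refine sum_le_sum fun x _ => ?_
  rw [sum_comm]
  refine sum_le_sum fun y _ => ?_
  simp only [ite_pow, one_pow, zero_pow two_ne_zero, mul_ite, mul_one, mul_zero, sum_ite_eq]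
  split_ifs
  exacts [le_rfl, hP x y]

end JointLaw

section Fibers

variable {M C ι : Type*} [DecidableEq ι] {p : M → ℝ} {W : M → C → ℝ}

noncomputable def fiberLikelihoodRatio (p phat : M → ℝ) (f : M → ι) (i : ι) (m : M) : ℝ :=
  if f m = i then phat m / p m else 0

lemma fiberLikelihoodRatio_self (phat : M → ℝ) (f : M → ι) (m : M) :
    fiberLikelihoodRatio p phat f (f m) m = phat m / p m :=
  if_pos rfl

lemma fiberLikelihoodRatio_of_ne (phat : M → ℝ) {f : M → ι} {i : ι} {m : M} (h : f m ≠ i) :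
    fiberLikelihoodRatio p phat f i m = 0 :=
  if_neg h

lemma sum_sum_mul_fiberLikelihoodRatio [Fintype M] [Fintype C] (hp : ∀ m, p m ≠ 0)
    (hW1 : ∀ m, ∑ c, W m c = 1) (phat : M → ℝ) (f : M → ι) (i : ι) :
    ∑ m, ∑ c, p m * W m c * fiberLikelihoodRatio p phat f i m =
      ∑ m, if f m = i then phat m else 0 := by
  refine sum_congr rfl fun m _ => ?_
  simp [← sum_mul, ← mul_sum, hW1, fiberLikelihoodRatio, mul_div_cancel₀ _ (hp m)]

lemma sum_sum_sum_mul_fiberLikelihoodRatio_sq [Fintype M] [Fintype C] (hp : ∀ m, p m ≠ 0)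
    (hW1 : ∀ m, ∑ c, W m c = 1) (phat : M → ℝ) (f : M → ι) :
    ∑ i ∈ univ.image f, ∑ m, ∑ c, p m * W m c * fiberLikelihoodRatio p phat f i m ^ 2 =
      ∑ m, phat m ^ 2 / p m := by
  rw [sum_comm]
  refine sum_congr rfl fun m _ => ?_
  rw [sum_eq_single_of_mem (f m) (mem_image_of_mem f (mem_univ m)) fun i _ hi => by
      simp only [fiberLikelihoodRatio_of_ne phat (Ne.symm hi), zero_pow two_ne_zero, mul_zero,
        sum_const_zero],
    fiberLikelihoodRatio_self, ← sum_mul, ← mul_sum, hW1, mul_one]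
  have hpm := hp m
  field_simp

lemma sum_sum_sum_mul_fiberLikelihoodRatio_mul_indicator [Fintype M] [Fintype C]
    (hp : ∀ m, p m ≠ 0) (phat : M → ℝ) (f : M → ι) (g : C → ι) :
    ∑ i ∈ univ.image f, ∑ m, ∑ c,
        p m * W m c * fiberLikelihoodRatio p phat f i m * (if g c = i then 1 else 0) =
      ∑ m, ∑ c, phat m * W m c * (if f m = g c then 1 else 0) := by
  rw [sum_comm]
  refine sum_congr rfl fun m _ => ?_
  rw [sum_comm]
  refine sum_congr rfl fun c _ => ?_
  rw [sum_eq_single_of_mem (f m) (mem_image_of_mem f (mem_univ m)) fun i _ hi => by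
      rw [fiberLikelihoodRatio_of_ne phat (Ne.symm hi), mul_zero, zero_mul],
    fiberLikelihoodRatio_self, mul_right_comm (p m), mul_div_cancel₀ _ (hp m)]
  simp only [@eq_comm _ (g c)]

end Fibers

theorem stmt13_general {M C : Type*} [Fintype M] [Fintype C]
    (p phat : M → ℝ) (hp : ∀ m, 0 < p m) (hp1 : ∑ m, p m = 1)
    (W : M → C → ℝ) (hW : ∀ m c, 0 ≤ W m c) (hW1 : ∀ m, ∑ c, W m c = 1)
    (f : M → ℕ) (ftilde : C → ℕ) :
    |(∑ m, ∑ c, phat m * W m c * (if f m = ftilde c then 1 else 0)) -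
      ∑' i : ℕ, (∑ m, if f m = i then phat m else 0) *
        (∑ m, ∑ c, (if ftilde c = i then p m * W m c else 0))| ≤
    maxCorr (fun m c => p m * W m c) *
      Real.sqrt ((∑ m, (phat m) ^ 2 / p m - 1) + 1) := by
  have hp0 : ∀ m, p m ≠ 0 := fun m => (hp m).ne'
  have hP : ∀ m c, 0 ≤ p m * W m c := fun m c => mul_nonneg (hp m).le (hW m c)
  have hP1 : ∑ m, ∑ c, p m * W m c = 1 := by simpa only [← mul_sum, hW1, mul_one] using hp1
  have hvanish : ∀ i ∉ univ.image f, (∑ m, if f m = i then phat m else 0) *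
      (∑ m, ∑ c, (if ftilde c = i then p m * W m c else 0)) = 0 := fun i hi => by
    rw [sum_eq_zero fun m _ => if_neg fun h : f m = i => hi (h ▸ mem_image_of_mem f (mem_univ m)),
      zero_mul]
  have hindicator : ∀ i, ∑ m, ∑ c, (if ftilde c = i then p m * W m c else 0) =
      ∑ m, ∑ c, p m * W m c * (if ftilde c = i then 1 else 0) := by
    simp only [mul_ite, mul_one, mul_zero, implies_true]
  have hcov := abs_sum_cov_le_maxCorr_mul_sqrt (univ.image f) hP hP1
    (fiberLikelihoodRatio p phat f) (fun i c => if ftilde c = i then 1 else 0)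
  rw [sum_sub_distrib, sum_sum_sum_mul_fiberLikelihoodRatio_mul_indicator hp0,
    sum_sum_sum_mul_fiberLikelihoodRatio_sq hp0 hW1] at hcov
  simp only [sum_sum_mul_fiberLikelihoodRatio hp0 hW1] at hcov
  have hsecond := (sum_sum_mul_indicator_sq_le hP (univ.image f) ftilde).trans hP1.le
  rw [tsum_eq_sum hvanish, sub_add_cancel]
  simp only [hindicator]
  exact hcov.trans ((mul_le_mul_of_nonneg_left (Real.sqrt_le_one.2 hsecond)
    (mul_nonneg maxCorr_nonneg (Real.sqrt_nonneg _))).trans_eq (mul_one _))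

theorem stmt13 {M C : Type*} [Fintype M] [Fintype C]
    (p phat : M → ℝ) (hp : ∀ m, 0 < p m) (hp1 : ∑ m, p m = 1)
    (hphat : ∀ m, 0 ≤ phat m) (hphat1 : ∑ m, phat m = 1)
    (W : M → C → ℝ) (hW : ∀ m c, 0 ≤ W m c) (hW1 : ∀ m, ∑ c, W m c = 1)
    (f : M → ℕ) (ftilde : C → ℕ) :
    |(∑ m, ∑ c, phat m * W m c * (if f m = ftilde c then 1 else 0)) -
      ∑' i : ℕ, (∑ m, if f m = i then phat m else 0) *
        (∑ m, ∑ c, (if ftilde c = i then p m * W m c else 0))| ≤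
    maxCorr (fun m c => p m * W m c) *
      Real.sqrt ((∑ m, (phat m) ^ 2 / p m - 1) + 1) :=
  stmt13_general p phat hp hp1 W hW hW1 f ftilde
end

section
/- One-bit guessing bound: In the setting of two pmfs p_M (strictly positive) and p̂_M on finite ℳ with a common Markov kernel p_{C|M}, joint laws ℙ and ℙ̂, and maximal correlation ρ = ρ_m(M;C) under ℙ, for any f: ℳ → {0,1} and f̃: 𝒞 → {0,1}: ℙ̂{f(M)=f̃(C)} − 1/2 ≤ √( (ρ²/4)(χ²(p̂_M‖p_M)+1) + (1−ρ²)(ℙ̂{f(M)=0} − 1/2)² ). -/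
open BigOperators Finset
open scoped Classical

/-!
Write `σ(b) = (-1)^b` and test the maximal correlation with `u(m) = σ(f m) p̂(m)/p(m)` and
`v(c) = σ(f̃ c)`. Under `ℙ` one has `E[u] = E_ℙ̂[σ(f)]`, `E[u²] = χ²(p̂‖p) + 1`, `E[v²] = 1` and
`E[u v] = E_ℙ̂[σ(f) σ(f̃)] = 2 ℙ̂{f = f̃} - 1`. Normalising the centred `u`, `v` in the definition
of `ρ` gives `Cov(u,v)² ≤ ρ² Var u Var v`, and the identity
`(a - b x)² = (a² - b²)(1 - x²) + (a x - b)²` turns this into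
`E[u v]² ≤ ρ² E[u²] + (1 - ρ²) E[u]²`, which is the claim.
-/


section JointExpectation

variable {X Y : Type*} [Fintype X] [Fintype Y]

def jointExpect (P : X → Y → ℝ) (h : X → Y → ℝ) : ℝ := ∑ x, ∑ y, P x y * h x y

variable {P : X → Y → ℝ}

lemma jointExpect_nonneg (hP : ∀ x y, 0 ≤ P x y) {h : X → Y → ℝ} (hh : ∀ x y, 0 ≤ h x y) :
    0 ≤ jointExpect P h :=
  sum_nonneg fun x _ => sum_nonneg fun y _ => mul_nonneg (hP x y) (hh x y)

lemma jointExpect_const_mul (c : ℝ) (h : X → Y → ℝ) :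
    jointExpect P (fun x y => c * h x y) = c * jointExpect P h := by
  simp only [jointExpect, mul_sum]
  congr! 2
  ring

lemma jointExpect_neg (h : X → Y → ℝ) :
    jointExpect P (fun x y => -h x y) = -jointExpect P h := by
  simpa using jointExpect_const_mul (P := P) (-1) h

lemma jointExpect_sub_const (hP1 : jointExpect P (fun _ _ => 1) = 1) (h : X → Y → ℝ) (c : ℝ) :
    jointExpect P (fun x y => h x y - c) = jointExpect P h - c := by
  simp only [jointExpect, mul_one] at hP1
  simp only [jointExpect, mul_sub, sum_sub_distrib, ← sum_mul, hP1, one_mul]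

lemma jointExpect_centered_mul (hP1 : jointExpect P (fun _ _ => 1) = 1) (u v : X → Y → ℝ) :
    jointExpect P (fun x y => (u x y - jointExpect P u) * (v x y - jointExpect P v)) =
      jointExpect P (fun x y => u x y * v x y) - jointExpect P u * jointExpect P v := by
  set a := jointExpect P u
  set b := jointExpect P v
  have hexpand : ∀ x y, P x y * ((u x y - a) * (v x y - b)) =
      P x y * (u x y * v x y) - a * (P x y * v x y) - b * (P x y * u x y) + a * b * (P x y * 1) :=
    fun x y => by ring
  simp only [jointExpect] at hP1 ⊢
  simp only [hexpand, sum_add_distrib, sum_sub_distrib, ← mul_sum, hP1]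
  simp only [a, b, jointExpect]
  ring

lemma sq_jointExpect_mul_le (hP : ∀ x y, 0 ≤ P x y) (u v : X → Y → ℝ) :
    jointExpect P (fun x y => u x y * v x y) ^ 2 ≤
      jointExpect P (fun x y => u x y ^ 2) * jointExpect P (fun x y => v x y ^ 2) := by
  simp only [jointExpect, ← Fintype.sum_prod_type']
  exact sum_sq_le_sum_mul_sum_of_sq_le_mul _
    (fun z _ => mul_nonneg (hP z.1 z.2) (sq_nonneg _))
    (fun z _ => mul_nonneg (hP z.1 z.2) (sq_nonneg _)) (fun z _ => le_of_eq (by ring))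

lemma sq_jointExpect_le_jointExpect_sq (hP : ∀ x y, 0 ≤ P x y)
    (hP1 : jointExpect P (fun _ _ => 1) = 1) (h : X → Y → ℝ) :
    jointExpect P h ^ 2 ≤ jointExpect P (fun x y => h x y ^ 2) := by
  simpa [hP1] using sq_jointExpect_mul_le hP h (fun _ _ => 1)

lemma jointExpect_mul_le_maxCorr (hP : ∀ x y, 0 ≤ P x y) {f : X → ℝ} {g : Y → ℝ}
    (hf : jointExpect P (fun x _ => f x) = 0) (hg : jointExpect P (fun _ y => g y) = 0)
    (hf2 : jointExpect P (fun x _ => f x ^ 2) = 1) (hg2 : jointExpect P (fun _ y => g y ^ 2) = 1) :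
    jointExpect P (fun x y => f x * g y) ≤ maxCorr P := by
  refine le_csSup ⟨1, ?_⟩ ⟨f, g, hf, hg, hf2, hg2, by simp only [jointExpect, mul_assoc]⟩
  rintro r ⟨f, g, -, -, hf2, hg2, rfl⟩
  have h := sq_jointExpect_mul_le hP (fun x _ => f x) (fun _ y => g y)
  simp only [jointExpect, ← mul_assoc] at h
  rw [hf2, hg2, one_mul] at h
  nlinarith

lemma jointExpect_mul_le_maxCorr_mul_sqrt (hP : ∀ x y, 0 ≤ P x y) {f : X → ℝ} {g : Y → ℝ}
    (hf : jointExpect P (fun x _ => f x) = 0) (hg : jointExpect P (fun _ y => g y) = 0)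
    (ha : 0 < jointExpect P (fun x _ => f x ^ 2)) (hb : 0 < jointExpect P (fun _ y => g y ^ 2)) :
    jointExpect P (fun x y => f x * g y) ≤
      maxCorr P *
        (√(jointExpect P (fun x _ => f x ^ 2)) * √(jointExpect P (fun _ y => g y ^ 2))) := by
  set a := jointExpect P (fun x _ => f x ^ 2)
  set b := jointExpect P (fun _ y => g y ^ 2)
  have hσ : (√a)⁻¹ ^ 2 * a = 1 := by rw [inv_pow, Real.sq_sqrt ha.le, inv_mul_cancel₀ ha.ne']
  have hτ : (√b)⁻¹ ^ 2 * b = 1 := by rw [inv_pow, Real.sq_sqrt hb.le, inv_mul_cancel₀ hb.ne']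
  have h := jointExpect_mul_le_maxCorr hP (f := fun x => (√a)⁻¹ * f x)
    (g := fun y => (√b)⁻¹ * g y)
    (by rw [jointExpect_const_mul, hf, mul_zero]) (by rw [jointExpect_const_mul, hg, mul_zero])
    (by simp only [mul_pow]; rw [jointExpect_const_mul, hσ])
    (by simp only [mul_pow]; rw [jointExpect_const_mul, hτ])
  have hfg : (fun x y => (√a)⁻¹ * f x * ((√b)⁻¹ * g y)) =
      fun x y => ((√a)⁻¹ * (√b)⁻¹) * (f x * g y) := by
    ext
    ring
  rw [hfg, jointExpect_const_mul, ← mul_inv, inv_mul_le_iff₀ (by positivity)] at h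
  linarith

lemma sq_jointExpect_mul_le_maxCorr_sq_mul (hP : ∀ x y, 0 ≤ P x y) {f : X → ℝ} {g : Y → ℝ}
    (hf : jointExpect P (fun x _ => f x) = 0) (hg : jointExpect P (fun _ y => g y) = 0) :
    jointExpect P (fun x y => f x * g y) ^ 2 ≤
      maxCorr P ^ 2 * jointExpect P (fun x _ => f x ^ 2) * jointExpect P (fun _ y => g y ^ 2) := by
  set a := jointExpect P (fun x _ => f x ^ 2)
  set b := jointExpect P (fun _ y => g y ^ 2)
  have hcs : jointExpect P (fun x y => f x * g y) ^ 2 ≤ a * b :=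
    sq_jointExpect_mul_le hP (fun x _ => f x) (fun _ y => g y)
  have ha : 0 ≤ a := jointExpect_nonneg hP fun _ _ => sq_nonneg _
  have hb : 0 ≤ b := jointExpect_nonneg hP fun _ _ => sq_nonneg _
  rcases ha.eq_or_lt with ha0 | ha0
  · rw [← ha0] at hcs ⊢; simpa using hcs
  rcases hb.eq_or_lt with hb0 | hb0
  · rw [← hb0] at hcs ⊢; simpa using hcs
  have hpos := jointExpect_mul_le_maxCorr_mul_sqrt hP hf hg ha0 hb0
  have hneg := jointExpect_mul_le_maxCorr_mul_sqrt hP (f := fun x => -f x)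
    (by rw [jointExpect_neg, hf, neg_zero]) hg (by simpa only [neg_sq] using ha0) hb0
  simp only [neg_mul, neg_sq, jointExpect_neg] at hneg
  have hab : (√a * √b) ^ 2 = a * b := by rw [mul_pow, Real.sq_sqrt ha, Real.sq_sqrt hb]
  calc jointExpect P (fun x y => f x * g y) ^ 2 ≤ (maxCorr P * (√a * √b)) ^ 2 :=
        sq_le_sq' (by linarith) hpos
    _ = maxCorr P ^ 2 * a * b := by rw [mul_pow, hab, mul_assoc]

lemma sq_cov_le_maxCorr_sq_mul_var (hP : ∀ x y, 0 ≤ P x y)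
    (hP1 : jointExpect P (fun _ _ => 1) = 1) (u : X → ℝ) (v : Y → ℝ) :
    (jointExpect P (fun x y => u x * v y) -
        jointExpect P (fun x _ => u x) * jointExpect P (fun _ y => v y)) ^ 2 ≤
      maxCorr P ^ 2 * (jointExpect P (fun x _ => u x ^ 2) - jointExpect P (fun x _ => u x) ^ 2) *
        (jointExpect P (fun _ y => v y ^ 2) - jointExpect P (fun _ y => v y) ^ 2) := by
  have h := sq_jointExpect_mul_le_maxCorr_sq_mul hP
    (f := fun x => u x - jointExpect P (fun x _ => u x))
    (g := fun y => v y - jointExpect P (fun _ y => v y))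
    (by rw [jointExpect_sub_const hP1, sub_self]) (by rw [jointExpect_sub_const hP1, sub_self])
  simp only [sq] at h ⊢
  rwa [jointExpect_centered_mul hP1, jointExpect_centered_mul hP1,
    jointExpect_centered_mul hP1] at h

lemma sq_sub_sq_le_of_sq_sub_mul_le {a b x K : ℝ} (hK : 0 ≤ K) (hx : x ^ 2 ≤ 1)
    (h : (a - b * x) ^ 2 ≤ K * (1 - x ^ 2)) : a ^ 2 - b ^ 2 ≤ K := by
  have hid : (a - b * x) ^ 2 = (a ^ 2 - b ^ 2) * (1 - x ^ 2) + (a * x - b) ^ 2 := by ring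
  rcases hx.lt_or_eq with hx1 | hx1
  · refine le_of_mul_le_mul_right ?_ (sub_pos.2 hx1)
    nlinarith [sq_nonneg (a * x - b)]
  · have hab : a = b * x := by
      rw [hx1, sub_self, mul_zero] at h
      exact sub_eq_zero.1 (pow_eq_zero_iff two_ne_zero |>.1 (le_antisymm h (sq_nonneg _)))
    rw [hab, mul_pow, hx1, mul_one, sub_self]
    exact hK

lemma sq_jointExpect_mul_le_of_jointExpect_sq_eq_one (hP : ∀ x y, 0 ≤ P x y)
    (hP1 : jointExpect P (fun _ _ => 1) = 1) (u : X → ℝ) {v : Y → ℝ}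
    (hv : jointExpect P (fun _ y => v y ^ 2) = 1) :
    jointExpect P (fun x y => u x * v y) ^ 2 ≤
      maxCorr P ^ 2 * jointExpect P (fun x _ => u x ^ 2) +
        (1 - maxCorr P ^ 2) * jointExpect P (fun x _ => u x) ^ 2 := by
  have hcov := sq_cov_le_maxCorr_sq_mul_var hP hP1 u v
  have hu := sq_jointExpect_le_jointExpect_sq hP hP1 (fun x _ => u x)
  have hv' := sq_jointExpect_le_jointExpect_sq hP hP1 (fun _ y => v y)
  rw [hv] at hcov hv'
  have := sq_sub_sq_le_of_sq_sub_mul_le (mul_nonneg (sq_nonneg _) (sub_nonneg.2 hu)) hv' hcov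
  linarith

end JointExpectation

section Kernel

variable {X Y : Type*} [Fintype X] [Fintype Y] {p q : X → ℝ} {W : X → Y → ℝ}

lemma jointExpect_mul_kernel_of_fst (hW1 : ∀ x, ∑ y, W x y = 1) (h : X → ℝ) :
    jointExpect (fun x y => q x * W x y) (fun x _ => h x) = ∑ x, q x * h x := by
  simp only [jointExpect, mul_assoc, ← mul_sum, ← sum_mul, hW1, one_mul]

lemma jointExpect_mul_kernel_ratio_mul (hp : ∀ x, p x ≠ 0) (s : X → ℝ) (t : Y → ℝ) :
    jointExpect (fun x y => p x * W x y) (fun x y => s x * q x / p x * t y) =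
      jointExpect (fun x y => q x * W x y) (fun x y => s x * t y) := by
  simp only [jointExpect]
  congr! 2 with x _ y _
  field_simp [hp x]

lemma jointExpect_mul_kernel_ratio (hW1 : ∀ x, ∑ y, W x y = 1) (hp : ∀ x, p x ≠ 0) (s : X → ℝ) :
    jointExpect (fun x y => p x * W x y) (fun x _ => s x * q x / p x) = ∑ x, s x * q x := by
  rw [jointExpect_mul_kernel_of_fst hW1]
  congr! 1 with x _
  field_simp [hp x]

lemma jointExpect_mul_kernel_ratio_sq (hW1 : ∀ x, ∑ y, W x y = 1) (hp : ∀ x, p x ≠ 0)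
    {s : X → ℝ} (hs : ∀ x, s x ^ 2 = 1) :
    jointExpect (fun x y => p x * W x y) (fun x _ => (s x * q x / p x) ^ 2) =
      ∑ x, q x ^ 2 / p x := by
  rw [jointExpect_mul_kernel_of_fst hW1]
  congr! 1 with x _
  simp only [div_pow, mul_pow, hs]
  field_simp [hp x]

end Kernel

-- `(-1) ^ b`, reading `false` as `0` and `true` as `1`.
def boolSign (b : Bool) : ℝ := if b then -1 else 1

lemma boolSign_sq (b : Bool) : boolSign b ^ 2 = 1 := by
  cases b <;> norm_num [boolSign]

lemma jointExpect_ite_eq {X Y : Type*} [Fintype X] [Fintype Y] {P : X → Y → ℝ}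
    (hP1 : jointExpect P (fun _ _ => 1) = 1) (a : X → Bool) (b : Y → Bool) :
    jointExpect P (fun x y => if a x = b y then 1 else 0) =
      (1 + jointExpect P (fun x y => boolSign (a x) * boolSign (b y))) / 2 := by
  have hsign : ∀ x y, (if a x = b y then (1 : ℝ) else 0) =
      1 / 2 * (1 + boolSign (a x) * boolSign (b y)) := fun x y => by
    cases a x <;> cases b y <;> norm_num [boolSign]
  simp only [hsign, jointExpect_const_mul]
  simp only [jointExpect, mul_add, sum_add_distrib] at hP1 ⊢
  rw [hP1]
  ring

lemma sum_ite_eq_false {ι : Type*} [Fintype ι] {q : ι → ℝ} (hq : ∑ i, q i = 1) (a : ι → Bool) :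
    (∑ i, if a i = false then q i else 0) = (1 + ∑ i, boolSign (a i) * q i) / 2 := by
  have hsign : ∀ i, (if a i = false then q i else 0) = (q i + boolSign (a i) * q i) / 2 :=
    fun i => by cases a i <;> norm_num [boolSign]
  simp only [hsign, ← sum_div, sum_add_distrib, hq]

theorem stmt16_general {M C : Type*} [Fintype M] [Fintype C]
    (p phat : M → ℝ) (hp : ∀ m, 0 < p m) (hp1 : ∑ m, p m = 1)
    (hphat1 : ∑ m, phat m = 1)
    (W : M → C → ℝ) (hW : ∀ m c, 0 ≤ W m c) (hW1 : ∀ m, ∑ c, W m c = 1)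
    (ρ : ℝ) (hρ : ρ = maxCorr (fun m c => p m * W m c))
    (f : M → Bool) (ftilde : C → Bool) :
    (∑ m, ∑ c, phat m * W m c * (if f m = ftilde c then 1 else 0)) - 1 / 2 ≤
    Real.sqrt (ρ ^ 2 / 4 * ((∑ m, (phat m) ^ 2 / p m - 1) + 1) +
      (1 - ρ ^ 2) * ((∑ m, if f m = false then phat m else 0) - 1 / 2) ^ 2) := by
  have hp0 : ∀ m, p m ≠ 0 := fun m => (hp m).ne'
  have hP : ∀ m c, 0 ≤ p m * W m c := fun m c => mul_nonneg (hp m).le (hW m c)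
  have hP1 := (jointExpect_mul_kernel_of_fst (q := p) hW1 fun _ => 1).trans (by simpa using hp1)
  have hPhat1 := (jointExpect_mul_kernel_of_fst (q := phat) hW1 fun _ => 1).trans
    (by simpa using hphat1)
  have hv : jointExpect (fun m c => p m * W m c) (fun _ c => boolSign (ftilde c) ^ 2) = 1 := by
    simpa [boolSign_sq] using hP1
  have hbound := sq_jointExpect_mul_le_of_jointExpect_sq_eq_one hP hP1
    (fun m => boolSign (f m) * phat m / p m) hv
  rw [jointExpect_mul_kernel_ratio_mul hp0, jointExpect_mul_kernel_ratio hW1 hp0,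
    jointExpect_mul_kernel_ratio_sq hW1 hp0 fun m => boolSign_sq (f m), ← hρ] at hbound
  change jointExpect _ (fun m c => if f m = ftilde c then 1 else 0) - 1 / 2 ≤ _
  rw [jointExpect_ite_eq hPhat1, sum_ite_eq_false hphat1]
  apply Real.le_sqrt_of_sq_le
  nlinarith [hbound]

theorem stmt16 {M C : Type*} [Fintype M] [Fintype C]
    (p phat : M → ℝ) (hp : ∀ m, 0 < p m) (hp1 : ∑ m, p m = 1)
    (hphat : ∀ m, 0 ≤ phat m) (hphat1 : ∑ m, phat m = 1)
    (W : M → C → ℝ) (hW : ∀ m c, 0 ≤ W m c) (hW1 : ∀ m, ∑ c, W m c = 1)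
    (ρ : ℝ) (hρ : ρ = maxCorr (fun m c => p m * W m c))
    (f : M → Bool) (ftilde : C → Bool) :
    (∑ m, ∑ c, phat m * W m c * (if f m = ftilde c then 1 else 0)) - 1 / 2 ≤
    Real.sqrt (ρ ^ 2 / 4 * ((∑ m, (phat m) ^ 2 / p m - 1) + 1) +
      (1 - ρ ^ 2) * ((∑ m, if f m = false then phat m else 0) - 1 / 2) ^ 2) :=
  stmt16_general p phat hp hp1 hphat1 W hW hW1 ρ hρ f ftilde
end

section
/- There exists a cipher whose maximal correlation equals 1 even though I(M;C) → 0 as n → ∞: with ℳ = 𝒞 = 𝒦 = [0:2ⁿ−1], K uniform, M uniform and independent of K, and E(k,m) = m + k mod (2ⁿ−1) if m < 2ⁿ−1 and E(k, 2ⁿ−1) = 2ⁿ−1, the ciphertext C = E(K,M) satisfies ρ_m(M;C) = 1 while I(M;C) = 2⁻ⁿ(n + 2 − 2^{−(n−1)}). -/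
open BigOperators Finset
open scoped Classical

/-- The cipher `E(k,m) = m + k mod (2^n − 1)` if `m < 2^n − 1`, and
`E(k, 2^n − 1) = 2^n − 1`. -/
def modEnc (n : ℕ) (k m : Fin (2 ^ n)) : Fin (2 ^ n) :=
  if hm : (m : ℕ) < 2 ^ n - 1 then
    ⟨((m : ℕ) + (k : ℕ)) % (2 ^ n - 1), by
      have h1 : 0 < 2 ^ n - 1 := by omega
      exact lt_of_lt_of_le (Nat.mod_lt _ h1) (Nat.sub_le _ _)⟩
  else m

section MaximalCorrelation

variable {X Y : Type*} [Fintype X] [Fintype Y]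

lemma sum_mul_mul_le_one {p : X → Y → ℝ} (hp : ∀ x y, 0 ≤ p x y) {f : X → ℝ} {g : Y → ℝ}
    (hf : ∑ x, ∑ y, p x y * f x ^ 2 = 1) (hg : ∑ x, ∑ y, p x y * g y ^ 2 = 1) :
    ∑ x, ∑ y, p x y * f x * g y ≤ 1 := by
  have hpt : ∀ x y, 2 * (p x y * f x * g y) ≤ p x y * f x ^ 2 + p x y * g y ^ 2 := fun x y => by
    nlinarith [mul_nonneg (hp x y) (sq_nonneg (f x - g y))]
  have := Finset.sum_le_sum fun x (_ : x ∈ univ) =>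
    Finset.sum_le_sum fun y (_ : y ∈ univ) => hpt x y
  simp only [← Finset.mul_sum, Finset.sum_add_distrib, hf, hg] at this
  linarith

theorem maxCorr_eq_one_of_ae_eq {p : X → Y → ℝ} (hp : ∀ x y, 0 ≤ p x y) (f : X → ℝ) (g : Y → ℝ)
    (hfg : ∀ x y, p x y ≠ 0 → f x = g y) (hf0 : ∑ x, ∑ y, p x y * f x = 0)
    (hf1 : ∑ x, ∑ y, p x y * f x ^ 2 = 1) : maxCorr p = 1 := by
  have hpg : ∀ x y, p x y * g y = p x y * f x := fun x y => by
    by_cases h : p x y = 0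
    · simp [h]
    · rw [hfg x y h]
  have hg1 : ∑ x, ∑ y, p x y * g y ^ 2 = 1 := by
    rw [← hf1]
    refine Fintype.sum_congr _ _ fun x => Fintype.sum_congr _ _ fun y => ?_
    linear_combination (g y + f x) * hpg x y
  have hfg1 : 1 = ∑ x, ∑ y, p x y * f x * g y := by
    rw [← hf1]
    refine Fintype.sum_congr _ _ fun x => Fintype.sum_congr _ _ fun y => ?_
    linear_combination -f x * hpg x y
  refine IsGreatest.csSup_eq ⟨⟨f, g, hf0, ?_, hf1, hg1, hfg1⟩, ?_⟩
  · simpa only [hpg] using hf0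
  · rintro r ⟨f', g', -, -, hf', hg', rfl⟩
    exact sum_mul_mul_le_one hp hf' hg'

theorem maxCorr_eq_one_of_event {p : X → Y → ℝ} (hp : ∀ x y, 0 ≤ p x y)
    (hp1 : ∑ x, ∑ y, p x y = 1) (A : Finset X) (B : Finset Y)
    (hA0 : 0 < ∑ x ∈ A, ∑ y, p x y) (hA1 : ∑ x ∈ A, ∑ y, p x y < 1)
    (hAB : ∀ x y, p x y ≠ 0 → (x ∈ A ↔ y ∈ B)) : maxCorr p = 1 := by
  set a := ∑ x ∈ A, ∑ y, p x y
  set σ := √(a * (1 - a))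
  have hσ : σ ^ 2 = a * (1 - a) := Real.sq_sqrt (by nlinarith)
  have hσ0 : σ ≠ 0 := (Real.sqrt_pos.2 (by nlinarith)).ne'
  have hexp : ∀ (F : X → ℝ) (α β : ℝ), (∀ x, F x = α * (if x ∈ A then 1 else 0) + β) →
      ∑ x, ∑ y, p x y * F x = α * a + β := by
    intro F α β hF
    have hrow : ∀ x, ∑ y, p x y * F x = α * (if x ∈ A then ∑ y, p x y else 0) + β * ∑ y, p x y := by
      intro x
      rw [← Finset.sum_mul, hF]
      split_ifs <;> ring
    rw [Fintype.sum_congr _ _ hrow, Finset.sum_add_distrib, ← Finset.mul_sum, ← Finset.mul_sum,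
      Finset.sum_ite_mem, univ_inter, hp1, mul_one]
  refine maxCorr_eq_one_of_ae_eq hp (fun x => ((if x ∈ A then 1 else 0) - a) / σ)
    (fun y => ((if y ∈ B then 1 else 0) - a) / σ) (fun x y h => by simp only [hAB x y h]) ?_ ?_
  · rw [hexp _ σ⁻¹ (-a / σ) fun x => by ring]
    field_simp
    ring
  · rw [hexp _ ((1 - 2 * a) / σ ^ 2) (a ^ 2 / σ ^ 2) fun x => by split_ifs <;> ring, hσ]
    have : 1 - a ≠ 0 := by linarith
    field_simp
    ring

end MaximalCorrelation

noncomputable def mutualInfo {X Y : Type*} [Fintype X] [Fintype Y] (p : X → Y → ℝ) : ℝ :=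
  ∑ x, ∑ y, p x y * Real.logb 2 (p x y / ((∑ y', p x y') * (∑ x', p x' y)))

section Cipher

variable {K M C : Type*} [Fintype K] [Fintype M] [DecidableEq C]

/-- The joint pmf of `(M, E(K, M))` for a uniform key `K` independent of a uniform message `M`. -/
noncomputable def cipherPMF (E : K → M → C) (m : M) (c : C) : ℝ :=
  (Fintype.card K : ℝ)⁻¹ * (Fintype.card M : ℝ)⁻¹ * ((univ.filter fun k => E k m = c).card : ℝ)

variable (E : K → M → C)

lemma cipherPMF_nonneg (m : M) (c : C) : 0 ≤ cipherPMF E m c := by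
  unfold cipherPMF
  positivity

lemma sum_cipherPMF_right [Fintype C] [Nonempty K] (m : M) :
    ∑ c, cipherPMF E m c = (Fintype.card M : ℝ)⁻¹ := by
  have hK : (Fintype.card K : ℝ) ≠ 0 := by positivity
  simp only [cipherPMF, ← Finset.mul_sum, ← Nat.cast_sum]
  rw [← Finset.card_eq_sum_card_fiberwise fun _ _ => Finset.mem_coe.2 (mem_univ _), card_univ]
  field_simp

lemma sum_sum_cipherPMF [Fintype C] [Nonempty K] [Nonempty M] :
    ∑ m, ∑ c, cipherPMF E m c = 1 := by
  have hM : (Fintype.card M : ℝ) ≠ 0 := by positivity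
  simp [sum_cipherPMF_right, hM]

variable {E}

lemma sum_card_filter_apply_eq_of_bijective (hE : ∀ k, Function.Bijective (E k)) (c : C) :
    ∑ m, (univ.filter fun k => E k m = c).card = Fintype.card K := by
  simp only [Finset.card_filter]
  rw [Finset.sum_comm]
  refine (Finset.sum_congr rfl fun k _ => ?_).trans (Finset.card_eq_sum_ones _).symm
  obtain ⟨m₀, hm₀, huniq⟩ := (hE k).existsUnique c
  rw [← Finset.card_filter, Finset.card_eq_one]
  exact ⟨m₀, by ext m; simpa using ⟨fun h => huniq m h, fun h => h ▸ hm₀⟩⟩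

lemma sum_cipherPMF_left [Nonempty K] (hE : ∀ k, Function.Bijective (E k)) (c : C) :
    ∑ m, cipherPMF E m c = (Fintype.card M : ℝ)⁻¹ := by
  have hK : (Fintype.card K : ℝ) ≠ 0 := by positivity
  simp only [cipherPMF, ← Finset.mul_sum, ← Nat.cast_sum,
    sum_card_filter_apply_eq_of_bijective hE c]
  field_simp

theorem mutualInfo_cipherPMF [Fintype C] [Nonempty K] (hE : ∀ k, Function.Bijective (E k))
    (hKM : Fintype.card K = Fintype.card M) :
    mutualInfo (cipherPMF E) = ((Fintype.card M : ℝ)⁻¹) ^ 2 *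
      ∑ m, ∑ c, ((univ.filter fun k => E k m = c).card : ℝ) *
        Real.logb 2 ((univ.filter fun k => E k m = c).card) := by
  have hM : (Fintype.card M : ℝ) ≠ 0 := by rw [← hKM]; positivity
  simp only [mutualInfo, sum_cipherPMF_right, sum_cipherPMF_left hE, Finset.mul_sum]
  refine Fintype.sum_congr _ _ fun m => Fintype.sum_congr _ _ fun c => ?_
  rw [cipherPMF, hKM]
  field_simp

end Cipher

section ModEnc

variable {n : ℕ}

def lastMsg (n : ℕ) : Fin (2 ^ n) := ⟨2 ^ n - 1, Nat.sub_lt (Nat.two_pow_pos n) one_pos⟩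

lemma val_lt_of_ne_lastMsg {m : Fin (2 ^ n)} (hm : m ≠ lastMsg n) : (m : ℕ) < 2 ^ n - 1 := by
  have := m.isLt
  have : (m : ℕ) ≠ 2 ^ n - 1 := fun h => hm (Fin.ext h)
  omega

lemma modEnc_lastMsg (k : Fin (2 ^ n)) : modEnc n k (lastMsg n) = lastMsg n := by
  simp [modEnc, lastMsg]

lemma val_modEnc_of_ne {m : Fin (2 ^ n)} (hm : m ≠ lastMsg n) (k : Fin (2 ^ n)) :
    (modEnc n k m : ℕ) = (m + k) % (2 ^ n - 1) := by
  simp [modEnc, val_lt_of_ne_lastMsg hm]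

lemma modEnc_eq_lastMsg_iff {k m : Fin (2 ^ n)} : modEnc n k m = lastMsg n ↔ m = lastMsg n := by
  by_cases hm : m = lastMsg n
  · simp [hm, modEnc_lastMsg]
  refine iff_of_false (fun h => ?_) hm
  have hlt := Nat.mod_lt (m + k) (Nat.zero_lt_of_lt (val_lt_of_ne_lastMsg hm))
  rw [← val_modEnc_of_ne hm k, h] at hlt
  exact hlt.ne rfl

lemma modEnc_lastMsg_left (m : Fin (2 ^ n)) : modEnc n (lastMsg n) m = m := by
  by_cases hm : m = lastMsg n
  · rw [hm, modEnc_lastMsg]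
  · rw [Fin.ext_iff, val_modEnc_of_ne hm, lastMsg, Nat.add_mod_right,
      Nat.mod_eq_of_lt (val_lt_of_ne_lastMsg hm)]

lemma modEnc_injective (k : Fin (2 ^ n)) : Function.Injective (modEnc n k) := by
  intro m m' h
  by_cases hm : m = lastMsg n
  · rw [hm, modEnc_lastMsg, eq_comm, modEnc_eq_lastMsg_iff] at h
    rw [hm, h]
  by_cases hm' : m' = lastMsg n
  · rw [hm', modEnc_lastMsg, modEnc_eq_lastMsg_iff] at h
    exact absurd h hm
  have h' : ((m : ℕ) + k) % (2 ^ n - 1) = ((m' : ℕ) + k) % (2 ^ n - 1) := by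
    rw [← val_modEnc_of_ne hm, ← val_modEnc_of_ne hm', h]
  exact Fin.ext <| (Nat.ModEq.add_right_cancel' _ h').eq_of_lt_of_lt
    (val_lt_of_ne_lastMsg hm) (val_lt_of_ne_lastMsg hm')

lemma modEnc_key_eq {m k k' : Fin (2 ^ n)} (hm : m ≠ lastMsg n) (hk : k ≠ lastMsg n)
    (hk' : k' ≠ lastMsg n) (h : modEnc n k m = modEnc n k' m) : k = k' := by
  have h' : ((m : ℕ) + k) % (2 ^ n - 1) = ((m : ℕ) + k') % (2 ^ n - 1) := by
    rw [← val_modEnc_of_ne hm, ← val_modEnc_of_ne hm, h]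
  exact Fin.ext <| (Nat.ModEq.add_left_cancel' _ h').eq_of_lt_of_lt
    (val_lt_of_ne_lastMsg hk) (val_lt_of_ne_lastMsg hk')

lemma card_modEnc_lastMsg_fiber (c : Fin (2 ^ n)) :
    (univ.filter fun k => modEnc n k (lastMsg n) = c).card = if c = lastMsg n then 2 ^ n else 0 := by
  simp only [modEnc_lastMsg]
  split_ifs with hc <;> simp [hc, eq_comm]

lemma card_modEnc_fiber_self {m : Fin (2 ^ n)} (hm : m ≠ lastMsg n) :
    (univ.filter fun k => modEnc n k m = m).card = 2 := by
  have hmL := val_lt_of_ne_lastMsg hm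
  set k₀ : Fin (2 ^ n) := ⟨0, Nat.two_pow_pos n⟩
  have hk₀ : modEnc n k₀ m = m := by
    rw [Fin.ext_iff, val_modEnc_of_ne hm, add_zero, Nat.mod_eq_of_lt hmL]
  have hk₀L : k₀ ≠ lastMsg n := fun h => by simp [k₀, lastMsg, Fin.ext_iff] at h; omega
  have hfix : univ.filter (fun k => modEnc n k m = m) = {k₀, lastMsg n} := by
    ext k
    simp only [mem_filter, mem_univ, true_and, mem_insert, mem_singleton]
    refine ⟨fun h => ?_, ?_⟩
    · by_cases hk : k = lastMsg n
      · exact Or.inr hk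
      · exact Or.inl (modEnc_key_eq hm hk hk₀L (h.trans hk₀.symm))
    · rintro (rfl | rfl)
      · exact hk₀
      · exact modEnc_lastMsg_left m
  rw [hfix, card_pair hk₀L]

lemma card_modEnc_fiber_le_one {m c : Fin (2 ^ n)} (hm : m ≠ lastMsg n) (hc : c ≠ m) :
    (univ.filter fun k => modEnc n k m = c).card ≤ 1 := by
  refine Finset.card_le_one.2 fun a ha b hb => ?_
  simp only [mem_filter, mem_univ, true_and] at ha hb
  have hne : ∀ k, modEnc n k m = c → k ≠ lastMsg n := by
    rintro k hk rfl
    exact hc (hk ▸ modEnc_lastMsg_left m)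
  exact modEnc_key_eq hm (hne a ha) (hne b hb) (ha.trans hb.symm)

lemma sum_card_mul_logb_modEnc_fiber (m : Fin (2 ^ n)) :
    ∑ c, ((univ.filter fun k => modEnc n k m = c).card : ℝ) *
        Real.logb 2 ((univ.filter fun k => modEnc n k m = c).card) =
      if m = lastMsg n then (n : ℝ) * 2 ^ n else 2 := by
  split_ifs with hm
  · subst hm
    simp [card_modEnc_lastMsg_fiber, apply_ite (fun a : ℕ => (a : ℝ)), Real.logb_pow]
    ring
  · rw [Finset.sum_eq_single m, card_modEnc_fiber_self hm]
    · simp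
    · intro c _ hc
      rcases Nat.le_one_iff_eq_zero_or_eq_one.1 (card_modEnc_fiber_le_one hm hc) with h | h <;>
        simp [h]
    · simp

theorem mutualInfo_modEnc (hn : 1 ≤ n) :
    mutualInfo (cipherPMF (modEnc n)) = (2 ^ n : ℝ)⁻¹ * (n + 2 - (2 ^ (n - 1) : ℝ)⁻¹) := by
  rw [mutualInfo_cipherPMF (fun k => Finite.injective_iff_bijective.1 (modEnc_injective k)) rfl]
  have hsplit : ∀ m : Fin (2 ^ n), (if m = lastMsg n then (n : ℝ) * 2 ^ n else 2) =
      2 + if m = lastMsg n then (n : ℝ) * 2 ^ n - 2 else 0 := fun m => by split_ifs <;> ring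
  simp only [sum_card_mul_logb_modEnc_fiber, hsplit, Finset.sum_add_distrib, Fintype.sum_ite_eq',
    sum_const, card_univ, Fintype.card_fin, nsmul_eq_mul, Nat.cast_pow, Nat.cast_ofNat]
  obtain ⟨n, rfl⟩ : ∃ k, n = k + 1 := ⟨n - 1, by omega⟩
  rw [Nat.add_sub_cancel, pow_succ]
  field_simp
  ring

theorem maxCorr_modEnc (hn : 1 ≤ n) : maxCorr (cipherPMF (modEnc n)) = 1 := by
  have hN : (2 : ℝ) ≤ 2 ^ n := by simpa using pow_le_pow_right₀ one_le_two hn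
  refine maxCorr_eq_one_of_event (cipherPMF_nonneg _) (sum_sum_cipherPMF _) {lastMsg n} {lastMsg n}
    ?_ ?_ fun m c h => ?_
  · simp [sum_cipherPMF_right]
  · simpa [sum_cipherPMF_right] using inv_lt_one_of_one_lt₀ (by linarith)
  · obtain ⟨k, hk⟩ : ∃ k, modEnc n k m = c := by
      by_contra! hc
      simp [cipherPMF, hc] at h
    simp only [mem_singleton, ← hk, modEnc_eq_lastMsg_iff]

lemma cipherPMF_modEnc (m c : Fin (2 ^ n)) :
    cipherPMF (modEnc n) m c =
      (2 ^ n : ℝ)⁻¹ * (2 ^ n : ℝ)⁻¹ * ((univ.filter fun k => modEnc n k m = c).card : ℝ) := by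
  simp [cipherPMF]

end ModEnc

theorem stmt19 (n : ℕ) (hn : 1 ≤ n) :
    maxCorr (fun (m c : Fin (2 ^ n)) =>
        ((2 ^ n : ℝ))⁻¹ * ((2 ^ n : ℝ))⁻¹ *
          ((univ.filter fun k : Fin (2 ^ n) => modEnc n k m = c).card : ℝ)) = 1 ∧
    (∑ m : Fin (2 ^ n), ∑ c : Fin (2 ^ n),
        (((2 ^ n : ℝ))⁻¹ * ((2 ^ n : ℝ))⁻¹ *
            ((univ.filter fun k : Fin (2 ^ n) => modEnc n k m = c).card : ℝ)) *
          Real.logb 2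
            ((((2 ^ n : ℝ))⁻¹ * ((2 ^ n : ℝ))⁻¹ *
                ((univ.filter fun k : Fin (2 ^ n) => modEnc n k m = c).card : ℝ)) /
              ((∑ c', ((2 ^ n : ℝ))⁻¹ * ((2 ^ n : ℝ))⁻¹ *
                  ((univ.filter fun k : Fin (2 ^ n) => modEnc n k m = c').card : ℝ)) *
                (∑ m', ((2 ^ n : ℝ))⁻¹ * ((2 ^ n : ℝ))⁻¹ *
                  ((univ.filter fun k : Fin (2 ^ n) => modEnc n k m' = c).card : ℝ))))) =
      ((2 ^ n : ℝ))⁻¹ * ((n : ℝ) + 2 - ((2 : ℝ) ^ (n - 1))⁻¹) := by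
  simp only [← cipherPMF_modEnc]
  exact ⟨maxCorr_modEnc hn, mutualInfo_modEnc hn⟩
end
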